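/- For q ∈ (0,1), a ∈ ℂ, and z ∈ ℂ with |z| < 1, the q-binomial theorem holds: Σ_{n=0}^∞ ((a;q)_n / (q;q)_n) z^n = (az;q)_∞ / (z;q)_∞, where (a;q)_n = Π_{m=0}^{n-1}(1 - a q^m) and (a;q)_∞ = Π_{m=0}^∞ (1 - a q^m). -/

import Mathlib

/-! The coefficients `c n = (a;q)_n / (q;q)_n` satisfy `c (n+1) (1 - q^(n+1)) = c n (1 - a q^n)`,
which makes `f w = ∑ c n w^n` satisfy `(1 - w) f w = (1 - a w) f (q w)`. Iterating gives
`f z (z;q)_N = (az;q)_N f (q^N z)`; since `q^N z → 0` and `f` is continuous at `0` with `f 0 = 1`,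
letting `N → ∞` yields `f z (z;q)_∞ = (az;q)_∞`. The `c n` are bounded, since they converge
to `(a;q)_∞ / (q;q)_∞`, and this bound gives both the convergence of `f` on the unit disc and
its continuity at `0` by dominated convergence. -/

open Finset

/-- finite q-Pochhammer symbol `(a;q)_n = ∏_{m=0}^{n-1} (1 - a q^m)` -/
noncomputable def qPoch (a q : ℂ) (n : ℕ) : ℂ :=
  ∏ m ∈ Finset.range n, (1 - a * q ^ m)

/-- infinite q-Pochhammer symbol `(a;q)_∞ = ∏_{m=0}^∞ (1 - a q^m)` -/
noncomputable def qPochInf (a q : ℂ) : ℂ :=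
  ∏' m : ℕ, (1 - a * q ^ m)

open Filter Topology

section Products

variable {q : ℂ}

lemma one_sub_mul_pow_ne_zero {b : ℂ} (hb : ‖b‖ < 1) (hq : ‖q‖ ≤ 1) (m : ℕ) :
    1 - b * q ^ m ≠ 0 := by
  refine sub_ne_zero.mpr fun h => (?_ : ‖b * q ^ m‖ < 1).ne (by rw [← h, norm_one])
  rw [norm_mul, norm_pow]
  exact (mul_le_of_le_one_right (norm_nonneg b) (pow_le_one₀ (norm_nonneg q) hq)).trans_lt hb

lemma summable_norm_neg_mul_pow (b : ℂ) (hq : ‖q‖ < 1) :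
    Summable fun m : ℕ => ‖-(b * q ^ m)‖ := by
  simpa [norm_mul, norm_pow] using
    (summable_geometric_of_lt_one (norm_nonneg q) hq).mul_left ‖b‖

lemma hasProd_qPochInf (b : ℂ) (hq : ‖q‖ < 1) :
    HasProd (fun m => 1 - b * q ^ m) (qPochInf b q) := by
  have hm : Multipliable fun m => 1 - b * q ^ m := by
    simpa [sub_eq_add_neg] using multipliable_one_add_of_summable (summable_norm_neg_mul_pow b hq)
  exact hm.hasProd

lemma tendsto_qPoch_atTop (b : ℂ) (hq : ‖q‖ < 1) :
    Tendsto (qPoch b q) atTop (𝓝 (qPochInf b q)) :=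
  (hasProd_qPochInf b hq).tendsto_prod_nat

lemma qPochInf_ne_zero {b : ℂ} (hq : ‖q‖ < 1) (hb : ∀ m, 1 - b * q ^ m ≠ 0) :
    qPochInf b q ≠ 0 := by
  simpa [qPochInf, sub_eq_add_neg] using
    tprod_one_add_ne_zero_of_summable (by simpa [sub_eq_add_neg] using hb)
      (summable_norm_neg_mul_pow b hq)

lemma qPoch_succ (b q : ℂ) (n : ℕ) : qPoch b q (n + 1) = qPoch b q n * (1 - b * q ^ n) :=
  prod_range_succ _ n

end Products

noncomputable def qBinomCoeff (a q : ℂ) (n : ℕ) : ℂ := qPoch a q n / qPoch q q n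

noncomputable def qBinomSeries (a q w : ℂ) : ℂ := ∑' n, qBinomCoeff a q n * w ^ n

section Coefficients

variable {a q : ℂ}

lemma qBinomCoeff_zero (a q : ℂ) : qBinomCoeff a q 0 = 1 := by
  simp [qBinomCoeff, qPoch]

lemma qBinomCoeff_succ_mul (hq : ‖q‖ < 1) (n : ℕ) :
    qBinomCoeff a q (n + 1) * (1 - q ^ (n + 1)) = qBinomCoeff a q n * (1 - a * q ^ n) := by
  have h : 1 - q ^ (n + 1) ≠ 0 := pow_succ' q n ▸ one_sub_mul_pow_ne_zero hq hq.le n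
  rw [qBinomCoeff, qBinomCoeff, qPoch_succ, qPoch_succ, ← pow_succ']
  field_simp

lemma exists_norm_qBinomCoeff_le (a : ℂ) (hq : ‖q‖ < 1) :
    ∃ C, ∀ n, ‖qBinomCoeff a q n‖ ≤ C := by
  have hlim : Tendsto (qBinomCoeff a q) atTop (𝓝 (qPochInf a q / qPochInf q q)) :=
    (tendsto_qPoch_atTop a hq).div (tendsto_qPoch_atTop q hq)
      (qPochInf_ne_zero hq (one_sub_mul_pow_ne_zero hq hq.le))
  obtain ⟨C, hC⟩ := isBounded_iff_forall_norm_le.mp (Metric.isBounded_range_of_tendsto _ hlim)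
  exact ⟨C, fun n => hC _ (Set.mem_range_self n)⟩

end Coefficients

lemma HasSum.shift_sub_mul_pow {R : Type*} [CommRing R] [TopologicalSpace R]
    [IsTopologicalRing R] {c : ℕ → R} {w s : R} (b : R) (h : HasSum (fun n => c n * w ^ n) s) :
    HasSum (fun n => (c (n + 1) - b * c n) * w ^ (n + 1)) ((1 - b * w) * s - c 0) := by
  have hshift : HasSum (fun n => c (n + 1) * w ^ (n + 1)) (s - c 0) := by
    simpa using (hasSum_nat_add_iff' 1).mpr h
  have hterm : (fun n => (c (n + 1) - b * c n) * w ^ (n + 1)) =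
      fun n => c (n + 1) * w ^ (n + 1) - b * w * (c n * w ^ n) := by
    funext n
    ring
  rw [hterm, show (1 - b * w) * s - c 0 = s - c 0 - b * w * s by ring]
  exact hshift.sub (h.mul_left (b * w))

lemma norm_mul_lt_one_of_norm_le_one {R : Type*} [SeminormedRing R] {x w : R} (hx : ‖x‖ ≤ 1)
    (hw : ‖w‖ < 1) : ‖x * w‖ < 1 :=
  (norm_mul_le x w).trans_lt ((mul_le_of_le_one_left (norm_nonneg w) hx).trans_lt hw)

section Series

variable {a q : ℂ}

lemma norm_qBinomCoeff_mul_pow_le {C r : ℝ} (hC : ∀ n, ‖qBinomCoeff a q n‖ ≤ C) {w : ℂ}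
    (hw : ‖w‖ ≤ r) (n : ℕ) : ‖qBinomCoeff a q n * w ^ n‖ ≤ C * r ^ n := by
  rw [norm_mul, norm_pow]
  exact mul_le_mul (hC n) (pow_le_pow_left₀ (norm_nonneg w) hw n) (by positivity)
    ((norm_nonneg _).trans (hC n))

lemma hasSum_qBinomSeries (a : ℂ) (hq : ‖q‖ < 1) {w : ℂ} (hw : ‖w‖ < 1) :
    HasSum (fun n => qBinomCoeff a q n * w ^ n) (qBinomSeries a q w) := by
  obtain ⟨C, hC⟩ := exists_norm_qBinomCoeff_le a hq
  exact (Summable.of_norm_bounded ((summable_geometric_of_lt_one (norm_nonneg w) hw).mul_left C)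
    (norm_qBinomCoeff_mul_pow_le hC le_rfl)).hasSum

lemma one_sub_mul_qBinomSeries (hq : ‖q‖ < 1) {w : ℂ} (hw : ‖w‖ < 1) :
    (1 - w) * qBinomSeries a q w = (1 - a * w) * qBinomSeries a q (q * w) := by
  have hl := (hasSum_qBinomSeries a hq hw).shift_sub_mul_pow 1
  have hr := hasSum_qBinomSeries a hq (norm_mul_lt_one_of_norm_le_one hq.le hw)
  simp only [mul_pow, ← mul_assoc] at hr
  have hterm : (fun n => (qBinomCoeff a q (n + 1) - 1 * qBinomCoeff a q n) * w ^ (n + 1)) =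
      fun n => (qBinomCoeff a q (n + 1) * q ^ (n + 1) - a * (qBinomCoeff a q n * q ^ n)) *
        w ^ (n + 1) := by
    funext n
    linear_combination w ^ (n + 1) * qBinomCoeff_succ_mul hq n
  rw [hterm] at hl
  linear_combination hl.unique (hr.shift_sub_mul_pow a)

lemma qBinomSeries_mul_qPoch (hq : ‖q‖ < 1) {z : ℂ} (hz : ‖z‖ < 1) (N : ℕ) :
    qBinomSeries a q z * qPoch z q N = qPoch (a * z) q N * qBinomSeries a q (q ^ N * z) := by
  induction N with
  | zero => simp [qPoch]
  | succ N ih =>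
    have hqN : ‖q ^ N‖ ≤ 1 := by
      rw [norm_pow]
      exact pow_le_one₀ (norm_nonneg q) hq.le
    have hfe := one_sub_mul_qBinomSeries (a := a) hq (norm_mul_lt_one_of_norm_le_one hqN hz)
    rw [← mul_assoc q, ← pow_succ'] at hfe
    rw [qPoch_succ, qPoch_succ]
    linear_combination (1 - z * q ^ N) * ih + qPoch (a * z) q N * hfe

lemma tendsto_qBinomSeries_nhds_zero (a : ℂ) (hq : ‖q‖ < 1) :
    Tendsto (qBinomSeries a q) (𝓝 0) (𝓝 1) := by
  obtain ⟨C, hC⟩ := exists_norm_qBinomCoeff_le a hq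
  have hsmall : ∀ᶠ w : ℂ in 𝓝 0, ‖w‖ ≤ 1 / 2 :=
    tendsto_norm_zero.eventually (ge_mem_nhds (by norm_num))
  have hlim := tendsto_tsum_of_dominated_convergence (summable_geometric_two.mul_left C)
    (fun n => ((continuous_pow n).tendsto 0).const_mul (qBinomCoeff a q n))
    (hsmall.mono fun w hw => norm_qBinomCoeff_mul_pow_le hC hw)
  rwa [tsum_eq_single 0 fun n hn => by simp [hn], pow_zero, mul_one, qBinomCoeff_zero] at hlim

theorem hasSum_qBinomCoeff_mul_pow (a : ℂ) (hq : ‖q‖ < 1) {z : ℂ} (hz : ‖z‖ < 1) :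
    HasSum (fun n => qBinomCoeff a q n * z ^ n) (qPochInf (a * z) q / qPochInf z q) := by
  have hqNz : Tendsto (fun N : ℕ => q ^ N * z) atTop (𝓝 0) := by
    simpa using (tendsto_pow_atTop_nhds_zero_of_norm_lt_one hq).mul_const z
  have hlhs := (tendsto_qPoch_atTop z hq).const_mul (qBinomSeries a q z)
  have hrhs := (tendsto_qPoch_atTop (a * z) hq).mul
    ((tendsto_qBinomSeries_nhds_zero a hq).comp hqNz)
  have hprod : qBinomSeries a q z * qPochInf z q = qPochInf (a * z) q * 1 :=
    tendsto_nhds_unique (hlhs.congr (qBinomSeries_mul_qPoch hq hz)) hrhs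
  rw [mul_one, ← eq_div_iff (qPochInf_ne_zero hq (one_sub_mul_pow_ne_zero hz hq.le))] at hprod
  exact hprod ▸ hasSum_qBinomSeries a hq hz

end Series

/-- The q-binomial theorem: for `0 < q < 1` and `|z| < 1`,
`Σ_{n=0}^∞ ((a;q)_n / (q;q)_n) z^n = (az;q)_∞ / (z;q)_∞`. -/
theorem q_binomial_theorem (q : ℝ) (hq : 0 < q) (hq1 : q < 1)
    (a z : ℂ) (hz : ‖z‖ < 1) :
    HasSum (fun n : ℕ => qPoch a (q : ℂ) n / qPoch (q : ℂ) (q : ℂ) n * z ^ n)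
      (qPochInf (a * z) (q : ℂ) / qPochInf z (q : ℂ)) :=
  hasSum_qBinomCoeff_mul_pow a (by rwa [Complex.norm_real, Real.norm_of_nonneg hq.le]) hz
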